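/- arXiv:1107.4711 — 5 statements merged into one kernel-verified Lean document; each statement's English description precedes it below -/
import Mathlib

section
/- An edge (v_i,v'_j) ∈ E is allowed in G if and only if i = j or the directed edge (u_i,u_j) ∈ F is contained in a directed cycle of the induced directed graph H. -/
/-- A set of edges (pairs (i,j), meaning the edge (v_i, v'_j) of a bipartite graph)
is a matching if its edges are pairwise non-adjacent. -/
def IsMatching (M : Finset (ℕ × ℕ)) : Prop :=
  ∀ e ∈ M, ∀ f ∈ M, e ≠ f → e.1 ≠ f.1 ∧ e.2 ≠ f.2

/-- A matching in the graph with edge set `E`. -/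
def IsMatchingIn (E M : Finset (ℕ × ℕ)) : Prop :=
  M ⊆ E ∧ IsMatching M

/-- A maximum (cardinality) matching in the graph with edge set `E`. -/
def IsMaxMatching (E M : Finset (ℕ × ℕ)) : Prop :=
  IsMatchingIn E M ∧ ∀ M', IsMatchingIn E M' → M'.card ≤ M.card

/-- An edge is allowed if it is included in some maximum matching. -/
def Allowed (E : Finset (ℕ × ℕ)) (e : ℕ × ℕ) : Prop :=
  ∃ M, IsMaxMatching E M ∧ e ∈ M

/-- The matching `{(v_0,v'_0),...,(v_{t-1},v'_{t-1})}` (0-based indexing). -/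
def diagM (t : ℕ) : Finset (ℕ × ℕ) :=
  (Finset.range t).image (fun i => (i, i))

/-- The edge set of the directed graph `H` induced by the bipartite graph with
edge set `E`: `(u_i, u_j)` is a directed edge iff `i ≠ j` and `(v_i, v'_j) ∈ E`. -/
def dirF (E : Finset (ℕ × ℕ)) : Finset (ℕ × ℕ) :=
  E.filter (fun p => p.1 ≠ p.2)

/-- The directed edge `e` is contained in a directed cycle of the directed graph
with edge set `F`: there are `ℓ ≥ 1` distinct nodes `f 0, ..., f (ℓ-1)` such that
`(f k, f (k+1 mod ℓ)) ∈ F` for all `k < ℓ`, and `e` is one of those edges. -/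
def InDirCycle (F : Finset (ℕ × ℕ)) (e : ℕ × ℕ) : Prop :=
  ∃ (ℓ : ℕ) (f : ℕ → ℕ), 1 ≤ ℓ ∧ Set.InjOn f (Set.Iio ℓ) ∧
    (∀ k < ℓ, (f k, f ((k + 1) % ℓ)) ∈ F) ∧ ∃ k < ℓ, e = (f k, f ((k + 1) % ℓ))

lemma matching_card_le (n : ℕ) (E M : Finset (ℕ × ℕ))
    (hE : E ⊆ Finset.range n ×ˢ Finset.range n) (h : IsMatchingIn E M) :
    M.card ≤ n := by
  classical
  have hinj : Set.InjOn Prod.fst (M : Set (ℕ × ℕ)) := by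
    intro e he f hf hef
    by_contra hne
    exact (h.2 e he f hf hne).1 hef
  calc M.card = (M.image Prod.fst).card := (Finset.card_image_of_injOn hinj).symm
    _ ≤ (Finset.range n).card := Finset.card_le_card (by
        intro x hx
        obtain ⟨e, heM, rfl⟩ := Finset.mem_image.mp hx
        exact (Finset.mem_product.mp (hE (h.1 heM))).1)
    _ = n := Finset.card_range n

lemma diag_card (n : ℕ) : (diagM n).card = n := by
  rw [diagM, Finset.card_image_of_injective _ (fun a b h => (Prod.mk.injEq _ _ _ _ ▸ h).1),
    Finset.card_range]

lemma diag_matchingIn (n : ℕ) (E : Finset (ℕ × ℕ)) (hM : diagM n ⊆ E) :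
    IsMatchingIn E (diagM n) := by
  refine ⟨hM, ?_⟩
  rintro e heM f hfM hef
  obtain ⟨a, -, rfl⟩ := Finset.mem_image.mp heM
  obtain ⟨b, -, rfl⟩ := Finset.mem_image.mp hfM
  have : a ≠ b := fun h => hef (by rw [h])
  exact ⟨this, this⟩

lemma succ_mod_injOn {ℓ a b : ℕ} (ha : a < ℓ) (hb : b < ℓ)
    (h : (a + 1) % ℓ = (b + 1) % ℓ) : a = b := by
  have h2 : a % ℓ = b % ℓ := Nat.ModEq.add_right_cancel' 1 h
  rwa [Nat.mod_eq_of_lt ha, Nat.mod_eq_of_lt hb] at h2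

lemma cycle_allowed (n : ℕ) (E : Finset (ℕ × ℕ))
    (hE : E ⊆ Finset.range n ×ˢ Finset.range n) (hM : diagM n ⊆ E)
    (i j : ℕ) (hc : InDirCycle (dirF E) (i, j)) : Allowed E (i, j) := by
  classical
  obtain ⟨ℓ, f, hℓ, hinj, hedge, k0, hk0, hk0e⟩ := hc
  have hFsub : dirF E ⊆ E := Finset.filter_subset _ _
  set C : Finset ℕ := (Finset.range ℓ).image f with hC
  have hCr : C ⊆ Finset.range n := by
    intro x hx
    obtain ⟨k, hk, rfl⟩ := Finset.mem_image.mp hx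
    exact (Finset.mem_product.mp (hE (hFsub (hedge k (Finset.mem_range.mp hk))))).1
  have hCcard : C.card = ℓ := by
    rw [hC, Finset.card_image_of_injOn (by rwa [Finset.coe_range]), Finset.card_range]
  set Mc : Finset (ℕ × ℕ) := (Finset.range ℓ).image (fun k => (f k, f ((k + 1) % ℓ))) with hMc
  set Md : Finset (ℕ × ℕ) :=
    ((Finset.range n).filter (fun x => x ∉ C)).image (fun x => (x, x)) with hMd
  set M : Finset (ℕ × ℕ) := Md ∪ Mc with hMdef
  -- membership characterizations
  have hmemc : ∀ e ∈ Mc, ∃ k, k < ℓ ∧ e = (f k, f ((k + 1) % ℓ)) := by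
    intro e heMc
    obtain ⟨k, hk, rfl⟩ := Finset.mem_image.mp heMc
    exact ⟨k, Finset.mem_range.mp hk, rfl⟩
  have hmemd : ∀ e ∈ Md, ∃ x, x < n ∧ x ∉ C ∧ e = (x, x) := by
    intro e heMd
    obtain ⟨x, hx, rfl⟩ := Finset.mem_image.mp heMd
    obtain ⟨hx1, hx2⟩ := Finset.mem_filter.mp hx
    exact ⟨x, Finset.mem_range.mp hx1, hx2, rfl⟩
  have hfC : ∀ k < ℓ, f k ∈ C := fun k hk =>
    Finset.mem_image_of_mem _ (Finset.mem_range.mpr hk)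
  -- subset of E
  have hsub : M ⊆ E := by
    intro e heM
    rcases Finset.mem_union.mp heM with h | h
    · obtain ⟨x, hx, -, rfl⟩ := hmemd e h
      exact hM (Finset.mem_image_of_mem _ (Finset.mem_range.mpr hx))
    · obtain ⟨k, hk, rfl⟩ := hmemc e h
      exact hFsub (hedge k hk)
  -- matching
  have hmatch : IsMatching M := by
    rintro e heM g hgM hne
    rcases Finset.mem_union.mp heM with h1 | h1 <;> rcases Finset.mem_union.mp hgM with h2 | h2
    · obtain ⟨x, -, -, rfl⟩ := hmemd e h1
      obtain ⟨y, -, -, rfl⟩ := hmemd g h2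
      have : x ≠ y := fun h => hne (by rw [h])
      exact ⟨this, this⟩
    · obtain ⟨x, -, hxC, rfl⟩ := hmemd _ h1
      obtain ⟨k, hk, rfl⟩ := hmemc _ h2
      refine ⟨fun h => hxC ?_, fun h => hxC ?_⟩
      · rw [show x = f k from h]; exact hfC k hk
      · rw [show x = f ((k+1) % ℓ) from h]
        exact hfC _ (Nat.mod_lt _ (Nat.lt_of_lt_of_le Nat.zero_lt_one hℓ))
    · obtain ⟨k, hk, rfl⟩ := hmemc _ h1
      obtain ⟨x, -, hxC, rfl⟩ := hmemd _ h2
      refine ⟨fun h => hxC ?_, fun h => hxC ?_⟩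
      · rw [show x = f k from h.symm]; exact hfC k hk
      · rw [show x = f ((k+1) % ℓ) from h.symm]
        exact hfC _ (Nat.mod_lt _ (Nat.lt_of_lt_of_le Nat.zero_lt_one hℓ))
    · obtain ⟨a, ha, rfl⟩ := hmemc e h1
      obtain ⟨b, hb, rfl⟩ := hmemc g h2
      have hab : a ≠ b := fun h => hne (by rw [h])
      constructor
      · exact fun h => hab (hinj ha hb h)
      · intro h
        have hℓ0 : 0 < ℓ := Nat.lt_of_lt_of_le Nat.zero_lt_one hℓ
        exact hab (succ_mod_injOn ha hb
          (hinj (Nat.mod_lt _ hℓ0) (Nat.mod_lt _ hℓ0) h))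
  -- cardinality
  have hdisj : Disjoint Md Mc := by
    rw [Finset.disjoint_left]
    intro e he1 he2
    obtain ⟨x, -, hxC, rfl⟩ := hmemd _ he1
    obtain ⟨k, hk, hke⟩ := hmemc _ he2
    exact hxC (by rw [show x = f k from congrArg Prod.fst hke]; exact hfC k hk)
  have hcardc : Mc.card = ℓ := by
    rw [hMc, Finset.card_image_of_injOn, Finset.card_range]
    intro a ha b hb h
    exact hinj (by simpa using ha) (by simpa using hb) (congrArg Prod.fst h)
  have hcardd : Md.card = n - ℓ := by
    rw [hMd, Finset.card_image_of_injective _ (fun a b h => (Prod.mk.injEq _ _ _ _ ▸ h).1)]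
    have hfil : Finset.filter (fun x => x ∉ C) (Finset.range n) = Finset.range n \ C := by
      ext x; simp [Finset.mem_sdiff]
    rw [hfil, Finset.card_sdiff_of_subset hCr, Finset.card_range, hCcard]
  have hcard : M.card = n := by
    have hℓn : ℓ ≤ n := hCcard ▸ (Finset.card_le_card hCr).trans_eq (Finset.card_range n)
    rw [hMdef, Finset.card_union_of_disjoint hdisj, hcardc, hcardd]
    omega
  refine ⟨M, ⟨⟨hsub, hmatch⟩, ?_⟩, ?_⟩
  · intro M' hM'
    rw [hcard]
    exact matching_card_le n E M' hE hM'
  · rw [hk0e]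
    exact Finset.mem_union_right _ (Finset.mem_image_of_mem _ (Finset.mem_range.mpr hk0))


/-- an edge `(v_i, v'_j) ∈ E` is allowed iff `i = j` or the directed
edge `(u_i, u_j)` lies on a directed cycle of the induced directed graph `H`. -/
theorem allowed_iff_eq_or_inDirCycle (n : ℕ) (E : Finset (ℕ × ℕ))
    (hE : E ⊆ Finset.range n ×ˢ Finset.range n) (hM : diagM n ⊆ E)
    (i j : ℕ) (he : (i, j) ∈ E) :
    Allowed E (i, j) ↔ i = j ∨ InDirCycle (dirF E) (i, j) := by
  classical
  have hi : i < n := Finset.mem_range.mp (Finset.mem_product.mp (hE he)).1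
  constructor
  · rintro ⟨M, hmax, hij⟩
    by_cases hij' : i = j
    · exact Or.inl hij'
    refine Or.inr ?_
    have hMsub : M ⊆ E := hmax.1.1
    have hmatch : IsMatching M := hmax.1.2
    have hcard : M.card = n := le_antisymm (matching_card_le n E M hE hmax.1)
      ((diag_card n) ▸ hmax.2 _ (diag_matchingIn n E hM))
    have hrange : ∀ e ∈ M, e.1 < n ∧ e.2 < n := by
      intro e heM
      have := Finset.mem_product.mp (hE (hMsub heM))
      exact ⟨Finset.mem_range.mp this.1, Finset.mem_range.mp this.2⟩
    -- fst surjective onto range n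
    have hfst : ∀ x, x < n → ∃ y, (x, y) ∈ M := by
      intro x hx
      have hinj : Set.InjOn Prod.fst (M : Set (ℕ × ℕ)) := by
        intro e heM g hgM hef
        by_contra hne
        exact (hmatch e heM g hgM hne).1 hef
      have himg : M.image Prod.fst = Finset.range n := by
        apply Finset.eq_of_subset_of_card_le
        · intro y hy
          obtain ⟨e, heM, rfl⟩ := Finset.mem_image.mp hy
          exact Finset.mem_range.mpr (hrange e heM).1
        · rw [Finset.card_range, Finset.card_image_of_injOn hinj, hcard]
      have : x ∈ M.image Prod.fst := himg ▸ Finset.mem_range.mpr hx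
      obtain ⟨e, heM, hex⟩ := Finset.mem_image.mp this
      exact ⟨e.2, by rw [← hex]; exact heM⟩
    set σ : ℕ → ℕ := fun x => if h : ∃ y, (x, y) ∈ M then h.choose else x with hσ
    have hmem : ∀ x, x < n → (x, σ x) ∈ M := by
      intro x hx
      have h : ∃ y, (x, y) ∈ M := hfst x hx
      simp only [hσ, dif_pos h]
      exact h.choose_spec
    have huniq : ∀ x y, (x, y) ∈ M → σ x = y := by
      intro x y hxy
      have hx : x < n := (hrange _ hxy).1
      have h1 := hmem x hx
      by_contra hne
      have : (x, σ x) ≠ (x, y) := fun h => hne (congrArg Prod.snd h)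
      exact (hmatch _ h1 _ hxy this).1 rfl
    have hσij : σ i = j := huniq i j hij
    have hclos : ∀ x, x < n → σ x < n := fun x hx => (hrange _ (hmem x hx)).2
    have hσinj : ∀ x y, x < n → y < n → σ x = σ y → x = y := by
      intro x y hx hy hxy
      by_contra hne
      have : (x, σ x) ≠ (y, σ y) := fun h => hne (congrArg Prod.fst h)
      exact (hmatch _ (hmem x hx) _ (hmem y hy) this).2 hxy
    have hiterclos : ∀ k x, x < n → σ^[k] x < n := by
      intro k
      induction k with
      | zero => intro x hx; simpa using hx
      | succ m ih =>
        intro x hx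
        rw [Function.iterate_succ_apply']
        exact hclos _ (ih x hx)
    have hiterinj : ∀ k x y, x < n → y < n → σ^[k] x = σ^[k] y → x = y := by
      intro k
      induction k with
      | zero => intro x y _ _ h; simpa using h
      | succ m ih =>
        intro x y hx hy h
        rw [Function.iterate_succ_apply', Function.iterate_succ_apply'] at h
        exact ih x y hx hy (hσinj _ _ (hiterclos m x hx) (hiterclos m y hy) h)
    have hcancel : ∀ a b, a ≤ b → σ^[a] i = σ^[b] i → σ^[b - a] i = i := by
      intro a b hab h
      have : σ^[a] (σ^[b - a] i) = σ^[a] i := by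
        rw [← Function.iterate_add_apply, Nat.add_sub_cancel' hab, h]
      exact hiterinj a _ i (hiterclos _ i hi) hi this
    have hP : ∃ k, 0 < k ∧ σ^[k] i = i := by
      have hmaps : ∀ k ∈ Finset.range (n + 1), σ^[k] i ∈ Finset.range n := by
        intro k _
        exact Finset.mem_range.mpr (hiterclos k i hi)
      obtain ⟨a, ha, b, hb, hne, heq⟩ :=
        Finset.exists_ne_map_eq_of_card_lt_of_maps_to
          (by simp [Finset.card_range]) hmaps
      rcases Nat.lt_or_ge a b with h | h
      · exact ⟨b - a, by omega, hcancel a b (Nat.le_of_lt h) heq⟩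
      · have h' : b < a := lt_of_le_of_ne h (Ne.symm hne)
        exact ⟨a - b, by omega, hcancel b a (Nat.le_of_lt h') heq.symm⟩
    set ℓ := Nat.find hP with hℓdef
    obtain ⟨hℓpos, hℓeq⟩ := Nat.find_spec hP
    rw [← hℓdef] at hℓpos hℓeq
    have hℓmin : ∀ m, m < ℓ → ¬(0 < m ∧ σ^[m] i = i) := fun m hm => Nat.find_min hP hm
    set f : ℕ → ℕ := fun k => σ^[k] i with hfdef
    have hfinj : Set.InjOn f (Set.Iio ℓ) := by
      intro a ha b hb hab
      rcases Nat.lt_or_ge a b with h | h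
      · have h0 := hcancel a b (Nat.le_of_lt h) hab
        have hblt : b < ℓ := hb
        exact absurd (show 0 < b - a ∧ σ^[b - a] i = i from ⟨by omega, h0⟩)
          (hℓmin (b - a) (by omega))
      · rcases Nat.lt_or_ge b a with h' | h'
        · have h0 := hcancel b a (Nat.le_of_lt h') hab.symm
          have halt : a < ℓ := ha
          exact absurd (show 0 < a - b ∧ σ^[a - b] i = i from ⟨by omega, h0⟩)
            (hℓmin (a - b) (by omega))
        · omega
    have hℓ2 : 2 ≤ ℓ := by
      rcases Nat.lt_or_ge ℓ 2 with h | h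
      · exfalso
        have h1 : ℓ = 1 := by omega
        have hfix : σ i = i := by
          have h2 := hℓeq
          rw [h1] at h2
          simpa using h2
        exact hij' (by rw [← hσij, hfix])
      · exact h
    have hσf : ∀ k, k < ℓ → f ((k + 1) % ℓ) = σ (f k) := by
      intro k hk
      rcases Nat.lt_or_ge (k + 1) ℓ with h | h
      · rw [Nat.mod_eq_of_lt h]
        exact Function.iterate_succ_apply' σ k i
      · have hk1 : k + 1 = ℓ := by omega
        have h2 : σ (f k) = i := by
          have h3 : σ^[k + 1] i = i := by rw [hk1]; exact hℓeq
          rw [← h3, Function.iterate_succ_apply']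
        rw [hk1, Nat.mod_self, h2]
        rfl
    refine ⟨ℓ, f, by omega, hfinj, ?_, 0, by omega, ?_⟩
    · intro k hk
      have hfk : f k < n := hiterclos k i hi
      have hedge : (f k, σ (f k)) ∈ M := hmem _ hfk
      have hne : f k ≠ f ((k + 1) % ℓ) := by
        intro hcontra
        have hk1 : (k + 1) % ℓ < ℓ := Nat.mod_lt _ (by omega)
        have heqk := hfinj (show k ∈ Set.Iio ℓ from hk)
          (show (k + 1) % ℓ ∈ Set.Iio ℓ from hk1) hcontra
        rcases Nat.lt_or_ge (k + 1) ℓ with h | h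
        · rw [Nat.mod_eq_of_lt h] at heqk; omega
        · rw [show k + 1 = ℓ by omega, Nat.mod_self] at heqk; omega
      refine Finset.mem_filter.mpr ⟨?_, hne⟩
      rw [hσf k hk]
      exact hMsub hedge
    · have h1 : (0 + 1) % ℓ = 1 := Nat.mod_eq_of_lt (by omega)
      rw [h1]
      show (i, j) = (σ^[0] i, σ^[1] i)
      simp [hσij]
  · rintro (rfl | hc)
    · refine ⟨diagM n, ⟨diag_matchingIn n E hM, ?_⟩, ?_⟩
      · intro M' hM'
        rw [diag_card]
        exact matching_card_le n E M' hE hM'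
      · exact Finset.mem_image_of_mem _ (Finset.mem_range.mpr hi)
    · exact cycle_allowed n E hE hM i j hc
end

section
/- Every allowed edge of type II with respect to M is contained in a left-augmented or a right-augmented alternating path in G with respect to M. -/
/-- An upper alternating path with respect to the maximum matching `diagM t`:
a set `P` of `ℓ - 1 ≥ 1` upper edges on `ℓ` distinct indices
`f 0, ..., f (ℓ-1) < t`, the edges being `(f 0, f 1), ..., (f (ℓ-2), f (ℓ-1))`. -/
def IsUpperAltPath (t : ℕ) (E : Finset (ℕ × ℕ)) (ℓ : ℕ) (f : ℕ → ℕ)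
    (P : Finset (ℕ × ℕ)) : Prop :=
  2 ≤ ℓ ∧ Set.InjOn f (Set.Iio ℓ) ∧ (∀ k < ℓ, f k < t) ∧
    P = (Finset.range (ℓ - 1)).image (fun k => (f k, f (k + 1))) ∧ P ⊆ E

/-- A left-augmented alternating path: an upper alternating path `P`, augmented
on the left by a lower edge `(v_{i0}, v'_{f 0})` with `i0 ≥ t`. -/
def IsLeftAugPath (t : ℕ) (E Q : Finset (ℕ × ℕ)) : Prop :=
  ∃ ℓ f P i0, IsUpperAltPath t E ℓ f P ∧ t ≤ i0 ∧ (i0, f 0) ∈ E ∧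
    Q = insert (i0, f 0) P

/-- A right-augmented alternating path: an upper alternating path `P`, augmented
on the right by a lower edge `(v_{f (ℓ-1)}, v'_r)` with `r ≥ t`. -/
def IsRightAugPath (t : ℕ) (E Q : Finset (ℕ × ℕ)) : Prop :=
  ∃ ℓ f P r, IsUpperAltPath t E ℓ f P ∧ t ≤ r ∧ (f (ℓ - 1), r) ∈ E ∧
    Q = insert (f (ℓ - 1), r) P

/-- An allowed edge of type II with respect to `diagM t`: an upper edge which is
allowed, but such that every maximum matching containing it also contains a
lower edge. -/
def IsTypeII (t : ℕ) (E : Finset (ℕ × ℕ)) (e : ℕ × ℕ) : Prop :=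
  e.1 < t ∧ e.2 < t ∧ Allowed E e ∧
    ∀ M, IsMaxMatching E M → e ∈ M → ∃ e' ∈ M, t ≤ e'.1 ∨ t ≤ e'.2

lemma matching_uniq_fst {N : Finset (ℕ × ℕ)} (h : IsMatching N) {i c d : ℕ}
    (h1 : (i, c) ∈ N) (h2 : (i, d) ∈ N) : c = d := by
  by_contra hcd
  exact (h _ h1 _ h2 (by simp [Prod.ext_iff, hcd])).1 rfl

lemma matching_uniq_snd {N : Finset (ℕ × ℕ)} (h : IsMatching N) {c d j : ℕ}
    (h1 : (c, j) ∈ N) (h2 : (d, j) ∈ N) : c = d := by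
  by_contra hcd
  exact (h _ h1 _ h2 (by simp [Prod.ext_iff, hcd])).2 rfl

lemma mem_diagM {t : ℕ} {p : ℕ × ℕ} : p ∈ diagM t ↔ p.2 = p.1 ∧ p.1 < t := by
  obtain ⟨i, j⟩ := p
  simp [diagM, Prod.ext_iff]
  aesop

lemma card_diagM (t : ℕ) : (diagM t).card = t := by
  rw [diagM, Finset.card_image_of_injective _ (fun i j h => by
    simpa using congrArg Prod.fst h), Finset.card_range]

lemma IsMatching.subset {A B : Finset (ℕ × ℕ)} (hAB : A ⊆ B) (hB : IsMatching B) :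
    IsMatching A := fun e he f hf hef => hB e (hAB he) f (hAB hf) hef

lemma isMatching_union {A B : Finset (ℕ × ℕ)} (hA : IsMatching A) (hB : IsMatching B)
    (hAB : ∀ p ∈ A, ∀ q ∈ B, p.1 ≠ q.1 ∧ p.2 ≠ q.2) : IsMatching (A ∪ B) := by
  intro e he f hf hef
  rcases Finset.mem_union.1 he with he | he <;> rcases Finset.mem_union.1 hf with hf | hf
  · exact hA e he f hf hef
  · exact hAB e he f hf
  · exact ⟨(hAB f hf e he).1.symm, (hAB f hf e he).2.symm⟩
  · exact hB e he f hf hef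

lemma isMatching_diag (S : Finset ℕ) : IsMatching (S.image fun s => (s, s)) := by
  intro e he f hf hef
  simp only [Finset.mem_image] at he hf
  obtain ⟨s, _, rfl⟩ := he
  obtain ⟨u, _, rfl⟩ := hf
  simp_all

lemma cycle_case (t k : ℕ) (E N : Finset (ℕ × ℕ)) (a b : ℕ) (x : ℕ → ℕ)
    (hM : IsMaxMatching E (diagM t))
    (hNE : N ⊆ E) (hNm : IsMatching N)
    (hII : ∀ M, IsMaxMatching E M → (a, b) ∈ M → ∃ e' ∈ M, t ≤ e'.1 ∨ t ≤ e'.2)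
    (ha : a < t) (heN : (a, b) ∈ N)
    (hx0 : x 0 = b) (hxt : ∀ i ≤ k, x i < t) (hxa : ∀ i ≤ k, x i ≠ a)
    (hxinj : Set.InjOn x (Set.Iic k)) (hxN : ∀ i < k, (x i, x (i + 1)) ∈ N)
    (hcyc : (x k, a) ∈ N) : False := by
  classical
  set S : Finset ℕ := insert a ((Finset.range (k + 1)).image x) with hS
  set cyc : Finset (ℕ × ℕ) :=
    insert (a, b) (insert (x k, a) ((Finset.range k).image fun i => (x i, x (i + 1)))) with hcycdef
  -- membership characterizations
  have hmemS : ∀ s, s ∈ S ↔ s = a ∨ ∃ i ≤ k, x i = s := by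
    intro s; simp [hS, Nat.lt_succ_iff]
  have hcycN : cyc ⊆ N := by
    intro p hp
    simp only [hcycdef, Finset.mem_insert, Finset.mem_image, Finset.mem_range] at hp
    rcases hp with rfl | rfl | ⟨i, hi, rfl⟩
    · exact heN
    · exact hcyc
    · exact hxN i hi
  have hcycS : ∀ p ∈ cyc, p.1 ∈ S ∧ p.2 ∈ S := by
    intro p hp
    simp only [hcycdef, Finset.mem_insert, Finset.mem_image, Finset.mem_range] at hp
    rcases hp with rfl | rfl | ⟨i, hi, rfl⟩
    · exact ⟨(hmemS a).2 (Or.inl rfl), (hmemS b).2 (Or.inr ⟨0, Nat.zero_le _, hx0⟩)⟩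
    · exact ⟨(hmemS _).2 (Or.inr ⟨k, le_refl _, rfl⟩), (hmemS a).2 (Or.inl rfl)⟩
    · exact ⟨(hmemS _).2 (Or.inr ⟨i, hi.le, rfl⟩),
        (hmemS _).2 (Or.inr ⟨i + 1, hi, rfl⟩)⟩
  set D : Finset (ℕ × ℕ) := ((Finset.range t) \ S).image fun s => (s, s) with hD
  set N' : Finset (ℕ × ℕ) := cyc ∪ D with hN'
  have hDmem : ∀ p ∈ D, ∃ s, s < t ∧ s ∉ S ∧ p = (s, s) := by
    intro p hp
    simp only [hD, Finset.mem_image, Finset.mem_sdiff, Finset.mem_range] at hp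
    obtain ⟨s, ⟨hs1, hs2⟩, rfl⟩ := hp
    exact ⟨s, hs1, hs2, rfl⟩
  -- N' is a matching in E
  have hN'E : N' ⊆ E := by
    intro p hp
    rcases Finset.mem_union.1 hp with hp | hp
    · exact hNE (hcycN hp)
    · obtain ⟨s, hs1, _, rfl⟩ := hDmem p hp
      exact hM.1.1 (mem_diagM.2 ⟨rfl, hs1⟩)
  have hN'm : IsMatching N' := by
    apply isMatching_union (hNm.subset hcycN) (isMatching_diag _)
    intro p hp q hq
    obtain ⟨s, _, hs2, rfl⟩ := hDmem q hq
    obtain ⟨h1, h2⟩ := hcycS p hp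
    constructor
    · intro h; simp only [] at h; exact hs2 (h ▸ h1)
    · intro h; simp only [] at h; exact hs2 (h ▸ h2)
  -- cardinalities
  have hScard : S.card = k + 2 := by
    rw [hS, Finset.card_insert_of_notMem, Finset.card_image_of_injOn, Finset.card_range]
    · intro i hi j hj hij
      exact hxinj (Nat.lt_succ_iff.1 (Finset.mem_range.1 hi))
        (Nat.lt_succ_iff.1 (Finset.mem_range.1 hj)) hij
    · simp only [Finset.mem_image, Finset.mem_range, Nat.lt_succ_iff, not_exists]
      intro i hi
      exact hxa i hi.1 hi.2
  have hSsub : S ⊆ Finset.range t := by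
    intro s hs
    rcases (hmemS s).1 hs with rfl | ⟨i, hi, rfl⟩
    · exact Finset.mem_range.2 ha
    · exact Finset.mem_range.2 (hxt i hi)
  have himcard : ((Finset.range k).image fun i => (x i, x (i + 1))).card = k := by
    rw [Finset.card_image_of_injOn, Finset.card_range]
    intro i hi j hj hij
    exact hxinj (Finset.mem_range.1 hi).le (Finset.mem_range.1 hj).le
      (by simpa using congrArg Prod.fst hij)
  have h2 : (x k, a) ∉ (Finset.range k).image fun i => (x i, x (i + 1)) := by
    simp only [Finset.mem_image, Finset.mem_range, not_exists, Prod.mk.injEq, not_and]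
    intro i hi hik _
    exact hi.ne (hxinj hi.le (le_refl k) hik)
  have h3 : (a, b) ∉ insert (x k, a) ((Finset.range k).image fun i => (x i, x (i + 1))) := by
    simp only [Finset.mem_insert, Finset.mem_image, Finset.mem_range, Prod.mk.injEq, not_or,
      not_exists, not_and]
    exact ⟨fun h _ => hxa k (le_refl k) h.symm, fun i hi h _ => hxa i hi.le h⟩
  have hcyccard : cyc.card = k + 2 := by
    rw [hcycdef, Finset.card_insert_of_notMem h3, Finset.card_insert_of_notMem h2, himcard]
  have hDcard : D.card = t - (k + 2) := by
    rw [hD, Finset.card_image_of_injOn (fun u _ v _ h => by simpa using congrArg Prod.fst h),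
      Finset.card_sdiff_of_subset hSsub, Finset.card_range, hScard]
  have hdisj : Disjoint cyc D := by
    rw [Finset.disjoint_left]
    intro p hp hpD
    obtain ⟨s, _, hs2, rfl⟩ := hDmem p hpD
    exact hs2 (hcycS _ hp).1
  have hkt : k + 2 ≤ t := by
    have := Finset.card_le_card hSsub
    rw [hScard, Finset.card_range] at this
    exact this
  have hN'card : N'.card = t := by
    rw [hN', Finset.card_union_of_disjoint hdisj, hcyccard, hDcard]
    omega
  have hN'max : IsMaxMatching E N' := by
    refine ⟨⟨hN'E, hN'm⟩, fun M'' h => ?_⟩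
    have := hM.2 M'' h
    rw [card_diagM] at this
    omega
  obtain ⟨e', he', hlow⟩ := hII N' hN'max (Finset.mem_union_left _ (Finset.mem_insert_self _ _))
  rcases Finset.mem_union.1 he' with he' | he'
  · simp only [hcycdef, Finset.mem_insert, Finset.mem_image, Finset.mem_range] at he'
    have hb : b < t := hx0 ▸ hxt 0 (Nat.zero_le _)
    rcases he' with rfl | rfl | ⟨i, hi, rfl⟩
    · simp at hlow; omega
    · have := hxt k (le_refl k); simp at hlow; omega
    · have := hxt i hi.le; have := hxt (i + 1) hi; simp at hlow; omega
  · obtain ⟨s, hs1, _, rfl⟩ := hDmem e' he'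
    simp at hlow; omega

lemma aug_case (t k L : ℕ) (E N : Finset (ℕ × ℕ)) (a b : ℕ) (x y : ℕ → ℕ)
    (hM : IsMaxMatching E (diagM t)) (hN : IsMaxMatching E N)
    (heN : (a, b) ∈ N)
    (hx0 : x 0 = b) (hxt : ∀ i ≤ k, x i < t) (hxa : ∀ i ≤ k, x i ≠ a)
    (hxinj : Set.InjOn x (Set.Iic k)) (hxN : ∀ i < k, (x i, x (i + 1)) ∈ N)
    (hdead : ¬∃ c, (x k, c) ∈ N)
    (hy0 : y 0 = a) (hyt : ∀ j ≤ L, y j < t)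
    (hyx : ∀ j ≤ L, ∀ i ≤ k, y j ≠ x i)
    (hyinj : Set.InjOn y (Set.Iic L)) (hyN : ∀ j < L, (y (j + 1), y j) ∈ N)
    (hnod : ¬∃ d, (d, y L) ∈ N) : False := by
  classical
  have cardN : N.card = t := by
    have h1 := hM.2 N hN.1
    have h2 := hN.2 (diagM t) hM.1
    rw [card_diagM] at h1 h2
    omega
  set Sx : Finset ℕ := (Finset.range (k + 1)).image x with hSx
  set Sy : Finset ℕ := (Finset.range (L + 1)).image y with hSy
  set S : Finset ℕ := Sx ∪ Sy with hSdef
  have hmemS : ∀ s, s ∈ S ↔ (∃ i ≤ k, x i = s) ∨ (∃ j ≤ L, y j = s) := by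
    intro s; simp [hSdef, hSx, hSy, Nat.lt_succ_iff]
  set pathx : Finset (ℕ × ℕ) := (Finset.range k).image fun i => (x i, x (i + 1)) with hpx
  set pathy : Finset (ℕ × ℕ) := (Finset.range L).image fun j => (y (j + 1), y j) with hpy
  set path : Finset (ℕ × ℕ) := insert (a, b) (pathx ∪ pathy) with hpathdef
  have hpathN : path ⊆ N := by
    intro p hp
    simp only [hpathdef, hpx, hpy, Finset.mem_insert, Finset.mem_union, Finset.mem_image,
      Finset.mem_range] at hp
    rcases hp with rfl | ⟨i, hi, rfl⟩ | ⟨j, hj, rfl⟩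
    · exact heN
    · exact hxN i hi
    · exact hyN j hj
  -- any edge of N incident to S lies on the path
  have hinc : ∀ p ∈ N, (p.1 ∈ S ∨ p.2 ∈ S) → p ∈ path := by
    rintro ⟨p1, p2⟩ hp hps
    have hmempath : ∀ (q : ℕ × ℕ), q = (a, b) ∨ (∃ i < k, (x i, x (i + 1)) = q) ∨
        (∃ j < L, (y (j + 1), y j) = q) → q ∈ path := by
      intro q hq
      simp only [hpathdef, hpx, hpy, Finset.mem_insert, Finset.mem_union, Finset.mem_image,
        Finset.mem_range]
      tauto
    rcases hps with hps | hps
    · rcases (hmemS p1).1 hps with ⟨i, hi, rfl⟩ | ⟨j, hj, rfl⟩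
      · rcases eq_or_lt_of_le hi with rfl | hik
        · exact absurd ⟨p2, hp⟩ hdead
        · have := matching_uniq_fst hN.1.2 hp (hxN i hik)
          exact hmempath _ (Or.inr (Or.inl ⟨i, hik, by rw [this]⟩))
      · rcases Nat.eq_zero_or_pos j with rfl | hj1
        · rw [hy0] at hp
          have := matching_uniq_fst hN.1.2 hp heN
          exact hmempath _ (Or.inl (by rw [this, hy0]))
        · have hj' : j - 1 < L := by omega
          have hyj : y (j - 1 + 1) = y j := by congr 1; omega
          have := matching_uniq_fst hN.1.2 hp (hyj ▸ hyN (j - 1) hj')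
          exact hmempath _ (Or.inr (Or.inr ⟨j - 1, hj', by rw [this, hyj]⟩))
    · rcases (hmemS p2).1 hps with ⟨i, hi, rfl⟩ | ⟨j, hj, rfl⟩
      · rcases Nat.eq_zero_or_pos i with rfl | hi1
        · rw [hx0] at hp
          have := matching_uniq_snd hN.1.2 hp heN
          exact hmempath _ (Or.inl (by rw [this, hx0]))
        · have hi' : i - 1 < k := by omega
          have hxi : x (i - 1 + 1) = x i := by congr 1; omega
          have := matching_uniq_snd hN.1.2 hp (hxi ▸ hxN (i - 1) hi')
          exact hmempath _ (Or.inr (Or.inl ⟨i - 1, hi', by rw [this, hxi]⟩))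
      · rcases eq_or_lt_of_le hj with rfl | hjL
        · exact absurd ⟨p1, hp⟩ hnod
        · have := matching_uniq_snd hN.1.2 hp (hyN j hjL)
          exact hmempath _ (Or.inr (Or.inr ⟨j, hjL, by rw [this]⟩))
  set diagS : Finset (ℕ × ℕ) := S.image fun s => (s, s) with hdS
  set N'' : Finset (ℕ × ℕ) := diagS ∪ (N \ path) with hN''
  have hdSmem : ∀ p ∈ diagS, ∃ s, s ∈ S ∧ p = (s, s) := by
    intro p hp
    simp only [hdS, Finset.mem_image] at hp
    obtain ⟨s, hs, rfl⟩ := hp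
    exact ⟨s, hs, rfl⟩
  have hSt : ∀ s ∈ S, s < t := by
    intro s hs
    rcases (hmemS s).1 hs with ⟨i, hi, rfl⟩ | ⟨j, hj, rfl⟩
    · exact hxt i hi
    · exact hyt j hj
  -- N'' is a matching in E
  have hN''E : N'' ⊆ E := by
    intro p hp
    rcases Finset.mem_union.1 hp with hp | hp
    · obtain ⟨s, hs, rfl⟩ := hdSmem p hp
      exact hM.1.1 (mem_diagM.2 ⟨rfl, hSt s hs⟩)
    · exact hN.1.1 (Finset.mem_sdiff.1 hp).1
  have hN''m : IsMatching N'' := by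
    apply isMatching_union (isMatching_diag _) (hN.1.2.subset (Finset.sdiff_subset))
    intro p hp q hq
    obtain ⟨s, hs, rfl⟩ := hdSmem p hp
    obtain ⟨hqN, hqpath⟩ := Finset.mem_sdiff.1 hq
    constructor
    · intro h; simp only [] at h
      exact hqpath (hinc q hqN (Or.inl (h ▸ hs)))
    · intro h; simp only [] at h
      exact hqpath (hinc q hqN (Or.inr (h ▸ hs)))
  -- cardinalities
  have hSxcard : Sx.card = k + 1 := by
    rw [hSx, Finset.card_image_of_injOn, Finset.card_range]
    intro i hi j hj hij
    exact hxinj (Nat.lt_succ_iff.1 (Finset.mem_range.1 hi))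
      (Nat.lt_succ_iff.1 (Finset.mem_range.1 hj)) hij
  have hSycard : Sy.card = L + 1 := by
    rw [hSy, Finset.card_image_of_injOn, Finset.card_range]
    intro i hi j hj hij
    exact hyinj (Nat.lt_succ_iff.1 (Finset.mem_range.1 hi))
      (Nat.lt_succ_iff.1 (Finset.mem_range.1 hj)) hij
  have hSxy : Disjoint Sx Sy := by
    rw [Finset.disjoint_left]
    intro s hs hs'
    simp only [hSx, hSy, Finset.mem_image, Finset.mem_range, Nat.lt_succ_iff] at hs hs'
    obtain ⟨i, hi, rfl⟩ := hs
    obtain ⟨j, hj, hji⟩ := hs'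
    exact hyx j hj i hi hji
  have hScard : S.card = k + L + 2 := by
    rw [hSdef, Finset.card_union_of_disjoint hSxy, hSxcard, hSycard]; omega
  have hdScard : diagS.card = k + L + 2 := by
    rw [hdS, Finset.card_image_of_injOn (fun u _ v _ h => by simpa using congrArg Prod.fst h),
      hScard]
  have hpxcard : pathx.card = k := by
    rw [hpx, Finset.card_image_of_injOn, Finset.card_range]
    intro i hi j hj hij
    exact hxinj (Finset.mem_range.1 hi).le (Finset.mem_range.1 hj).le
      (by simpa using congrArg Prod.fst hij)
  have hpycard : pathy.card = L := by
    rw [hpy, Finset.card_image_of_injOn, Finset.card_range]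
    intro i hi j hj hij
    have : y i = y j := by simpa using congrArg Prod.snd hij
    exact hyinj (Finset.mem_range.1 hi).le (Finset.mem_range.1 hj).le this
  have hpxy : Disjoint pathx pathy := by
    rw [Finset.disjoint_left]
    intro p hp hp'
    simp only [hpx, hpy, Finset.mem_image, Finset.mem_range] at hp hp'
    obtain ⟨i, hi, rfl⟩ := hp
    obtain ⟨j, hj, hji⟩ := hp'
    exact hyx (j + 1) hj i hi.le (by simpa using congrArg Prod.fst hji)
  have habnotmem : (a, b) ∉ pathx ∪ pathy := by
    simp only [hpx, hpy, Finset.mem_union, Finset.mem_image, Finset.mem_range, Prod.mk.injEq,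
      not_or, not_exists, not_and]
    constructor
    · intro i hi h _
      exact hxa i hi.le h
    · intro j hj _ h
      exact hyx j hj.le 0 (Nat.zero_le _) (h.trans hx0.symm)
  have hpathcard : path.card = k + L + 1 := by
    rw [hpathdef, Finset.card_insert_of_notMem habnotmem,
      Finset.card_union_of_disjoint hpxy, hpxcard, hpycard]
  have hdisj : Disjoint diagS (N \ path) := by
    rw [Finset.disjoint_left]
    intro p hp hp'
    obtain ⟨s, hs, rfl⟩ := hdSmem p hp
    obtain ⟨hpN, hppath⟩ := Finset.mem_sdiff.1 hp'
    exact hppath (hinc _ hpN (Or.inl hs))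
  have hpathle : path.card ≤ N.card := Finset.card_le_card hpathN
  have hN''card : N''.card = t + 1 := by
    rw [hN'', Finset.card_union_of_disjoint hdisj, hdScard, Finset.card_sdiff_of_subset hpathN, cardN,
      hpathcard]
    rw [cardN, hpathcard] at hpathle
    omega
  have := hM.2 N'' ⟨hN''E, hN''m⟩
  rw [card_diagM, hN''card] at this
  omega

def ext0 (a : ℕ) (x : ℕ → ℕ) : ℕ → ℕ := fun i => match i with
  | 0 => a
  | Nat.succ j => x j

/-- every allowed edge of type II with respect to `M = diagM t` is
contained in a left-augmented or a right-augmented alternating path. -/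
theorem typeII_mem_augPath (n1 n2 t : ℕ) (E : Finset (ℕ × ℕ)) (hn : n1 ≤ n2)
    (hE : E ⊆ Finset.range n1 ×ˢ Finset.range n2)
    (hM : IsMaxMatching E (diagM t)) :
    ∀ e ∈ E, IsTypeII t E e →
      ∃ Q, (IsLeftAugPath t E Q ∨ IsRightAugPath t E Q) ∧ e ∈ Q := by
  classical
  rintro ⟨a, b⟩ heE ⟨ha, hb, ⟨N, hNmax, heN⟩, hII⟩
  have ha : a < t := ha
  have hb : b < t := hb
  have hNm : IsMatching N := hNmax.1.2
  have hNE : N ⊆ E := hNmax.1.1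
  have hab : a ≠ b := by
    rintro rfl
    obtain ⟨e', he', hlow⟩ := hII (diagM t) hM (mem_diagM.2 ⟨rfl, ha⟩)
    obtain ⟨h1, h2⟩ := mem_diagM.1 he'
    omega
  -- the right chain
  set P1 : ℕ → Prop := fun m => ∃ x : ℕ → ℕ, x 0 = b ∧ (∀ i ≤ m, x i < t) ∧
    (∀ i ≤ m, x i ≠ a) ∧ Set.InjOn x (Set.Iic m) ∧ ∀ i < m, (x i, x (i + 1)) ∈ N with hP1
  have hP1bound : ∀ m, P1 m → m < t := by
    rintro m ⟨x, -, hxt, -, hxinj, -⟩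
    have := Finset.card_le_card_of_injOn x
      (fun i hi => Finset.mem_range.2 (hxt i (Finset.mem_Iic.1 hi)))
      (by rwa [Finset.coe_Iic])
    rw [Nat.card_Iic, Finset.card_range] at this
    omega
  have hP10 : P1 0 := ⟨fun _ => b, rfl, fun i _ => hb, fun i _ h => hab h.symm,
    fun i hi j hj _ => by
      simp only [Set.mem_Iic, Nat.le_zero] at hi hj; omega,
    fun i hi => absurd hi (Nat.not_lt_zero i)⟩
  set k := Nat.findGreatest P1 t with hk
  have hP1k : P1 k := Nat.findGreatest_spec (Nat.zero_le t) hP10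
  have hknext : ¬P1 (k + 1) := fun h =>
    Nat.findGreatest_is_greatest (Nat.lt_succ_self k) (hP1bound _ h).le h
  obtain ⟨x, hx0, hxt, hxa, hxinj, hxN⟩ := hP1k
  by_cases hc : ∃ c, (x k, c) ∈ N
  · obtain ⟨c, hcN⟩ := hc
    by_cases hct : t ≤ c
    · -- RIGHT-AUGMENTED PATH found
      refine ⟨insert (x k, c) ((Finset.range (k + 1)).image fun i => (ext0 a x i, ext0 a x (i + 1))),
        Or.inr ⟨k + 2, ext0 a x, _, c, ⟨by omega, ?_, ?_, rfl, ?_⟩, hct, ?_, rfl⟩, ?_⟩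
      · -- injectivity
        intro i hi j hj hij
        simp only [Set.mem_Iio] at hi hj
        match i, j with
        | 0, 0 => rfl
        | 0, Nat.succ j =>
          have hj' : a = x j := hij
          exact absurd hj'.symm (hxa j (by omega))
        | Nat.succ i, 0 =>
          have hi' : x i = a := hij
          exact absurd hi' (hxa i (by omega))
        | Nat.succ i, Nat.succ j =>
          have h' : x i = x j := hij
          have := hxinj (Set.mem_Iic.2 (by omega : i ≤ k)) (Set.mem_Iic.2 (by omega : j ≤ k)) h'
          omega
      · intro i hi
        match i with
        | 0 => exact ha
        | Nat.succ i => exact hxt i (by omega)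
      · intro p hp
        simp only [Finset.mem_image, Finset.mem_range] at hp
        obtain ⟨i, hi, rfl⟩ := hp
        match i, hi with
        | 0, _ =>
          show (a, x 0) ∈ E
          rw [hx0]; exact heE
        | Nat.succ i, hi =>
          show (x i, x (i + 1)) ∈ E
          exact hNE (hxN i (by omega))
      · show (x k, c) ∈ E
        exact hNE hcN
      · refine Finset.mem_insert_of_mem (Finset.mem_image.2 ⟨0, Finset.mem_range.2 (by omega), ?_⟩)
        show (a, x 0) = (a, b)
        rw [hx0]
    · push_neg at hct
      by_cases hca : c = a
      · -- cycle: contradiction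
        rw [hca] at hcN
        exact (cycle_case t k E N a b x hM hNE hNm hII ha heN hx0 hxt hxa hxinj hxN hcN).elim
      · -- extend the right chain: contradiction with maximality
        exfalso
        apply hknext
        have hcx : ∀ j ≤ k, c ≠ x j := by
          intro j hj h
          rcases Nat.eq_zero_or_pos j with rfl | hj1
          · rw [h, hx0] at hcN
            exact hxa k (le_refl k) (matching_uniq_snd hNm hcN heN)
          · have hj' : j - 1 < k := by omega
            have hxj : x (j - 1 + 1) = x j := by congr 1; omega
            rw [h] at hcN
            have := matching_uniq_snd hNm hcN (hxj ▸ hxN (j - 1) hj')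
            have := hxinj (Set.mem_Iic.2 (le_refl k)) (Set.mem_Iic.2 (by omega : j - 1 ≤ k)) this
            omega
        refine ⟨fun i => if i ≤ k then x i else c, ?_, ?_, ?_, ?_, ?_⟩
        · show (if 0 ≤ k then x 0 else c) = b
          rw [if_pos (Nat.zero_le k)]; exact hx0
        · intro i hi
          show (if i ≤ k then x i else c) < t
          by_cases h : i ≤ k
          · rw [if_pos h]; exact hxt i h
          · rw [if_neg h]; exact hct
        · intro i hi
          show (if i ≤ k then x i else c) ≠ a
          by_cases h : i ≤ k
          · rw [if_pos h]; exact hxa i h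
          · rw [if_neg h]; exact hca
        · intro i hi j hj hij
          simp only [Set.mem_Iic] at hi hj
          have hij' : (if i ≤ k then x i else c) = (if j ≤ k then x j else c) := hij
          by_cases h1 : i ≤ k <;> by_cases h2 : j ≤ k
          · rw [if_pos h1, if_pos h2] at hij'
            exact hxinj (Set.mem_Iic.2 h1) (Set.mem_Iic.2 h2) hij'
          · rw [if_pos h1, if_neg h2] at hij'
            exact absurd hij'.symm (hcx i h1)
          · rw [if_neg h1, if_pos h2] at hij'
            exact absurd hij' (hcx j h2)
          · omega
        · intro i hi
          show ((if i ≤ k then x i else c), (if i + 1 ≤ k then x (i + 1) else c)) ∈ N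
          rcases Nat.lt_or_ge i k with h | h
          · rw [if_pos h.le, if_pos (by omega : i + 1 ≤ k)]
            exact hxN i h
          · have hik : i = k := by omega
            subst hik
            rw [if_pos (le_refl k), if_neg (by omega)]
            exact hcN
  · -- left chain
    set P2 : ℕ → Prop := fun m => ∃ y : ℕ → ℕ, y 0 = a ∧ (∀ j ≤ m, y j < t) ∧
      (∀ j ≤ m, ∀ i ≤ k, y j ≠ x i) ∧ Set.InjOn y (Set.Iic m) ∧
      ∀ j < m, (y (j + 1), y j) ∈ N with hP2
    have hP2bound : ∀ m, P2 m → m < t := by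
      rintro m ⟨y, -, hyt, -, hyinj, -⟩
      have := Finset.card_le_card_of_injOn y
        (fun i hi => Finset.mem_range.2 (hyt i (Finset.mem_Iic.1 hi)))
        (by rwa [Finset.coe_Iic])
      rw [Nat.card_Iic, Finset.card_range] at this
      omega
    have hP20 : P2 0 := ⟨fun _ => a, rfl, fun j _ => ha, fun j _ i hi => (hxa i hi).symm,
      fun i hi j hj _ => by
        simp only [Set.mem_Iic, Nat.le_zero] at hi hj; omega,
      fun j hj => absurd hj (Nat.not_lt_zero j)⟩
    set L := Nat.findGreatest P2 t with hL
    have hP2L : P2 L := Nat.findGreatest_spec (Nat.zero_le t) hP20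
    have hLnext : ¬P2 (L + 1) := fun h =>
      Nat.findGreatest_is_greatest (Nat.lt_succ_self L) (hP2bound _ h).le h
    obtain ⟨y, hy0, hyt, hyx, hyinj, hyN⟩ := hP2L
    by_cases hd : ∃ d, (d, y L) ∈ N
    · obtain ⟨d, hdN⟩ := hd
      by_cases hdt : t ≤ d
      · -- LEFT-AUGMENTED PATH found
        refine ⟨_, Or.inl ⟨L + 2, fun i => if i ≤ L then y (L - i) else b, _, d,
            ⟨by omega, ?_, ?_, rfl, ?_⟩, hdt, ?_, rfl⟩, ?_⟩
        · intro i hi j hj hij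
          simp only [Set.mem_Iio] at hi hj
          have hij' : (if i ≤ L then y (L - i) else b) = (if j ≤ L then y (L - j) else b) := hij
          by_cases h1 : i ≤ L <;> by_cases h2 : j ≤ L
          · rw [if_pos h1, if_pos h2] at hij'
            have := hyinj (Set.mem_Iic.2 (by omega : L - i ≤ L))
              (Set.mem_Iic.2 (by omega : L - j ≤ L)) hij'
            omega
          · rw [if_pos h1, if_neg h2] at hij'
            rw [← hx0] at hij'
            exact absurd hij' (hyx (L - i) (by omega) 0 (Nat.zero_le k))
          · rw [if_neg h1, if_pos h2] at hij'
            rw [← hx0] at hij'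
            exact absurd hij'.symm (hyx (L - j) (by omega) 0 (Nat.zero_le k))
          · omega
        · intro i hi
          show (if i ≤ L then y (L - i) else b) < t
          by_cases h : i ≤ L
          · rw [if_pos h]; exact hyt (L - i) (by omega)
          · rw [if_neg h]; exact hb
        · intro p hp
          simp only [Finset.mem_image, Finset.mem_range] at hp
          obtain ⟨i, hi, rfl⟩ := hp
          rcases Nat.lt_or_ge i L with h | h
          · show ((if i ≤ L then y (L - i) else b), (if i + 1 ≤ L then y (L - (i + 1)) else b)) ∈ E
            rw [if_pos h.le, if_pos (by omega : i + 1 ≤ L)]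
            have h1 : L - i - 1 + 1 = L - i := by omega
            have h2 : L - (i + 1) = L - i - 1 := by omega
            rw [h2]
            exact hNE (h1 ▸ hyN (L - i - 1) (by omega))
          · have hiL : i = L := by omega
            subst hiL
            show ((if L ≤ L then y (L - L) else b), (if L + 1 ≤ L then y (L - (L + 1)) else b)) ∈ E
            rw [if_pos (le_refl L), if_neg (by omega), Nat.sub_self, hy0]
            exact heE
        · show (d, if 0 ≤ L then y (L - 0) else b) ∈ E
          rw [if_pos (Nat.zero_le L), Nat.sub_zero]
          exact hNE hdN
        · refine Finset.mem_insert_of_mem (Finset.mem_image.2 ⟨L, Finset.mem_range.2 (by omega), ?_⟩)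
          show ((if L ≤ L then y (L - L) else b), (if L + 1 ≤ L then y (L - (L + 1)) else b)) = (a, b)
          rw [if_pos (le_refl L), if_neg (by omega), Nat.sub_self, hy0]
      · push_neg at hdt
        exfalso
        apply hLnext
        have hdx : ∀ i ≤ k, d ≠ x i := by
          intro i hi h
          rcases Nat.lt_or_ge i k with h' | h'
          · rw [h] at hdN
            have := matching_uniq_fst hNm (hxN i h') hdN
            exact hyx L (le_refl L) (i + 1) h' this.symm
          · have : i = k := by omega
            subst this
            rw [h] at hdN
            exact hc ⟨y L, hdN⟩
        have hdy : ∀ j ≤ L, d ≠ y j := by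
          intro j hj h
          rcases Nat.eq_zero_or_pos j with rfl | hj1
          · rw [h, hy0] at hdN
            have := matching_uniq_fst hNm heN hdN
            exact hyx L (le_refl L) 0 (Nat.zero_le k) (by rw [← this, hx0])
          · have hj' : j - 1 < L := by omega
            have hyj : y (j - 1 + 1) = y j := by congr 1; omega
            rw [h] at hdN
            have := matching_uniq_fst hNm (hyj ▸ hyN (j - 1) hj') hdN
            have := hyinj (Set.mem_Iic.2 (by omega : j - 1 ≤ L)) (Set.mem_Iic.2 (le_refl L)) this
            omega
        refine ⟨fun j => if j ≤ L then y j else d, ?_, ?_, ?_, ?_, ?_⟩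
        · show (if 0 ≤ L then y 0 else d) = a
          rw [if_pos (Nat.zero_le L)]; exact hy0
        · intro j hj
          show (if j ≤ L then y j else d) < t
          by_cases h : j ≤ L
          · rw [if_pos h]; exact hyt j h
          · rw [if_neg h]; exact hdt
        · intro j hj i hi
          show (if j ≤ L then y j else d) ≠ x i
          by_cases h : j ≤ L
          · rw [if_pos h]; exact hyx j h i hi
          · rw [if_neg h]; exact hdx i hi
        · intro i hi j hj hij
          simp only [Set.mem_Iic] at hi hj
          have hij' : (if i ≤ L then y i else d) = (if j ≤ L then y j else d) := hij
          by_cases h1 : i ≤ L <;> by_cases h2 : j ≤ L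
          · rw [if_pos h1, if_pos h2] at hij'
            exact hyinj (Set.mem_Iic.2 h1) (Set.mem_Iic.2 h2) hij'
          · rw [if_pos h1, if_neg h2] at hij'
            exact absurd hij'.symm (hdy i h1)
          · rw [if_neg h1, if_pos h2] at hij'
            exact absurd hij' (hdy j h2)
          · omega
        · intro j hj
          show ((if j + 1 ≤ L then y (j + 1) else d), (if j ≤ L then y j else d)) ∈ N
          rcases Nat.lt_or_ge j L with h | h
          · rw [if_pos (by omega : j + 1 ≤ L), if_pos h.le]
            exact hyN j h
          · have hjL : j = L := by omega
            subst hjL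
            rw [if_neg (by omega), if_pos (le_refl L)]
            exact hdN
    · exact (aug_case t k L E N a b x y hM hNmax heN hx0 hxt hxa hxinj hxN hc
        hy0 hyt hyx hyinj hyN hd).elim
end

section
/- Let P = {(v_{j_i},v'_{ℓ_i}) : 1 ≤ i ≤ k} be a set of k pairwise non-adjacent edges of G, with A = {j_1,...,j_k} ⊂ [n1] and A' = {ℓ_1,...,ℓ_k} ⊂ [n2] the corresponding sets of k distinct indices. Then there exists a matching in G of size at least k + t − |A ∪ A'| that includes P. -/
/-- if `P` is a set of `k` pairwise non-adjacent edges with index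
sets `A = P.image Prod.fst` and `A' = P.image Prod.snd`, each consisting of `k`
distinct indices, then there is a matching in `G` of size at least
`k + t - |A ∪ A'|` that includes `P`. -/
theorem extend_matching_card_bound (n1 n2 t k : ℕ) (E : Finset (ℕ × ℕ))
    (hn : n1 ≤ n2) (ht : t ≤ n1)
    (hE : E ⊆ Finset.range n1 ×ˢ Finset.range n2)
    (hM : IsMaxMatching E (diagM t))
    (P : Finset (ℕ × ℕ)) (hPE : P ⊆ E) (hPm : IsMatching P) (hPk : P.card = k)
    (hA : (P.image Prod.fst).card = k) (hA' : (P.image Prod.snd).card = k) :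
    ∃ N, P ⊆ N ∧ IsMatchingIn E N ∧
      k + t - (P.image Prod.fst ∪ P.image Prod.snd).card ≤ N.card := by
    classical
  set S := P.image Prod.fst ∪ P.image Prod.snd with hS
  set D := ((Finset.range t).filter (fun i => i ∉ S)).image (fun i => (i, i)) with hD
  refine ⟨P ∪ D, Finset.subset_union_left, ⟨?_, ?_⟩, ?_⟩
  · intro e he
    rcases Finset.mem_union.1 he with h | h
    · exact hPE h
    · apply hM.1.1
      simp only [hD, Finset.mem_image, Finset.mem_filter] at h
      rcases h with ⟨i, ⟨hi, _⟩, rfl⟩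
      exact Finset.mem_image_of_mem _ hi
  · intro e he f hf hef
    have hdiag : ∀ e ∈ D, ∃ i, e = (i, i) ∧ i ∉ S := by
      intro e he
      simp only [hD, Finset.mem_image, Finset.mem_filter] at he
      rcases he with ⟨i, ⟨_, hi⟩, rfl⟩
      exact ⟨i, rfl, hi⟩
    have hPS1 : ∀ e ∈ P, e.1 ∈ S := fun e he =>
      Finset.mem_union_left _ (Finset.mem_image_of_mem _ he)
    have hPS2 : ∀ e ∈ P, e.2 ∈ S := fun e he =>
      Finset.mem_union_right _ (Finset.mem_image_of_mem _ he)
    rcases Finset.mem_union.1 he with he' | he' <;> rcases Finset.mem_union.1 hf with hf' | hf'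
    · exact hPm e he' f hf' hef
    · rcases hdiag f hf' with ⟨j, rfl, hj⟩
      exact ⟨fun h => hj (by simpa [h] using hPS1 e he'),
             fun h => hj (by simpa [h] using hPS2 e he')⟩
    · rcases hdiag e he' with ⟨i, rfl, hi⟩
      exact ⟨fun h => hi (by rw [show i = f.1 from h]; exact hPS1 f hf'),
             fun h => hi (by rw [show i = f.2 from h]; exact hPS2 f hf')⟩
    · rcases hdiag e he' with ⟨i, rfl, hi⟩
      rcases hdiag f hf' with ⟨j, rfl, hj⟩
      have : i ≠ j := fun h => hef (by simp [h])
      exact ⟨this, this⟩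
  · have hdisj : Disjoint P D := by
      rw [Finset.disjoint_left]
      intro e heP heD
      simp only [hD, Finset.mem_image, Finset.mem_filter] at heD
      rcases heD with ⟨i, ⟨_, hi⟩, rfl⟩
      exact hi (Finset.mem_union_left _ (Finset.mem_image_of_mem _ heP))
    rw [Finset.card_union_of_disjoint hdisj, hPk]
    have hDcard : D.card = ((Finset.range t).filter (fun i => i ∉ S)).card := by
      apply Finset.card_image_of_injective
      intro a b hab
      exact (Prod.mk.injEq a a b b ▸ hab).1
    have h1 : ((Finset.range t).filter (fun i => i ∉ S)).card
        = t - ((Finset.range t).filter (fun i => i ∈ S)).card := by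
      have := Finset.card_filter_add_card_filter_not (s := Finset.range t)
        (p := fun i => i ∈ S)
      simp only [Finset.card_range] at this
      omega
    have h2 : ((Finset.range t).filter (fun i => i ∈ S)).card ≤ S.card :=
      Finset.card_le_card (fun x hx => (Finset.mem_filter.1 hx).2)
    omega
end

section
/- Let (v_i,v'_j) be an M-lower edge of G with i > t and j ≤ t, and let G' be the graph obtained from G by removing the nodes v_i and v'_j and all edges adjacent to them. Then M \ {(v_j,v'_j)} is a maximum matching in G' (of size t − 1). -/
/-- let `(v_i, v'_j)` be an `M`-lower edge with `i ≥ t` and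
`j < t`, and let `G'` be the graph obtained from `G` by removing the nodes `v_i`
and `v'_j` together with all adjacent edges. Then `M \ {(v_j, v'_j)}` is a
maximum matching in `G'`, of size `t - 1`. -/
theorem lower_edge_removal_maxMatching (n1 n2 t : ℕ) (E : Finset (ℕ × ℕ))
    (hn : n1 ≤ n2) (hE : E ⊆ Finset.range n1 ×ˢ Finset.range n2)
    (hM : IsMaxMatching E (diagM t))
    (i j : ℕ) (he : (i, j) ∈ E) (hi : t ≤ i) (hj : j < t) :
    IsMaxMatching (E.filter (fun e => e.1 ≠ i ∧ e.2 ≠ j)) (diagM t \ {(j, j)}) ∧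
    (diagM t \ {(j, j)}).card = t - 1 := by
  obtain ⟨⟨hsub, hmatch⟩, hmax⟩ := hM
  have hcard : (diagM t).card = t := by
    rw [diagM, Finset.card_image_of_injective _ (fun a b h => by simpa using h),
      Finset.card_range]
  have hjj : (j, j) ∈ diagM t := by
    simp only [diagM, Finset.mem_image, Finset.mem_range]
    exact ⟨j, hj, rfl⟩
  have hcard' : (diagM t \ {(j, j)}).card = t - 1 := by
    rw [Finset.card_sdiff_of_subset (by simpa using hjj), hcard, Finset.card_singleton]
  refine ⟨⟨⟨?_, ?_⟩, ?_⟩, hcard'⟩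
  · intro e he'
    simp only [Finset.mem_sdiff, Finset.mem_singleton] at he'
    obtain ⟨he1, he2⟩ := he'
    simp only [diagM, Finset.mem_image, Finset.mem_range] at he1
    obtain ⟨k, hk, rfl⟩ := he1
    refine Finset.mem_filter.mpr ⟨hsub (by
      simp only [diagM, Finset.mem_image, Finset.mem_range]; exact ⟨k, hk, rfl⟩), ?_, ?_⟩
    · simp only; omega
    · simp only
      intro h
      exact he2 (by simp [h])
  · intro e he' f hf' hef
    exact hmatch e (Finset.mem_sdiff.mp he').1 f (Finset.mem_sdiff.mp hf').1 hef
  · intro N ⟨hNsub, hNmatch⟩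
    have hiN : (i, j) ∉ N := by
      intro h
      have := (Finset.mem_filter.mp (hNsub h)).2
      simp at this
    have hNE : insert (i, j) N ⊆ E := by
      intro e he'
      rcases Finset.mem_insert.mp he' with rfl | h
      · exact he
      · exact (Finset.mem_filter.mp (hNsub h)).1
    have hNm : IsMatching (insert (i, j) N) := by
      intro e he' f hf' hef
      rcases Finset.mem_insert.mp he' with rfl | he'' <;>
        rcases Finset.mem_insert.mp hf' with rfl | hf''
      · exact absurd rfl hef
      · have := (Finset.mem_filter.mp (hNsub hf'')).2
        exact ⟨fun h => this.1 h.symm, fun h => this.2 h.symm⟩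
      · have := (Finset.mem_filter.mp (hNsub he'')).2
        exact ⟨this.1, this.2⟩
      · exact hNmatch e he'' f hf'' hef
    have := hmax (insert (i, j) N) ⟨hNE, hNm⟩
    rw [Finset.card_insert_of_notMem hiN, hcard] at this
    omega
end

section
/- Let (v_i,v'_j) be an allowed edge of type I with respect to M, and suppose (u_j,u_{j_1}),(u_{j_1},u_{j_2}),...,(u_{j_{ℓ-1}},u_{j_ℓ}),(u_{j_ℓ},u_i) is a directed path in H_LR from u_j to u_i through distinct indices in {1,...,t}. Let G' be the graph obtained from G by removing the nodes v_i and v'_j and all edges adjacent to them. Then (M \ {(v_k,v'_k) : k ∈ {i,j,j_1,...,j_ℓ}}) ∪ {(v_j,v'_{j_1}),(v_{j_1},v'_{j_2}),...,(v_{j_{ℓ-1}},v'_{j_ℓ}),(v_{j_ℓ},v'_i)} is a maximum matching in G'. -/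
/-- let `(v_i, v'_j)` be an allowed edge of type I with respect to
`M = diagM t` (i.e. an upper edge included in a maximum matching consisting only
of upper edges), and suppose `g 0 = j, g 1, ..., g ℓ, g (ℓ+1) = i` is a directed
path in `H_LR` (whose edge set is `E`) from `u_j` to `u_i` through distinct
indices in `{0, ..., t-1}`. Let `G'` be obtained from `G` by removing the nodes
`v_i` and `v'_j` and all adjacent edges. Then
`(M \ {(v_k, v'_k) : k ∈ {i, j, g 1, ..., g ℓ}}) ∪ {(g m, g (m+1)) : 0 ≤ m ≤ ℓ}`
is a maximum matching in `G'`. -/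
theorem typeI_edge_removal_maxMatching (n1 n2 t : ℕ) (E : Finset (ℕ × ℕ))
    (hn : n1 ≤ n2) (hE : E ⊆ Finset.range n1 ×ˢ Finset.range n2)
    (hM : IsMaxMatching E (diagM t))
    (i j : ℕ) (he : (i, j) ∈ E) (hi : i < t) (hj : j < t)
    (hTypeI : ∃ M', IsMaxMatching E M' ∧ (i, j) ∈ M' ∧ ∀ e ∈ M', e.1 < t ∧ e.2 < t)
    (ℓ : ℕ) (g : ℕ → ℕ) (hg0 : g 0 = j) (hgend : g (ℓ + 1) = i)
    (hginj : Set.InjOn g (Set.Iic (ℓ + 1)))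
    (hgt : ∀ m ≤ ℓ + 1, g m < t)
    (hpath : ∀ m < ℓ + 1, (g m, g (m + 1)) ∈ E) :
    IsMaxMatching (E.filter (fun e => e.1 ≠ i ∧ e.2 ≠ j))
      ((diagM t).filter (fun e => ∀ m < ℓ + 2, g m ≠ e.1) ∪
        (Finset.range (ℓ + 1)).image (fun m => (g m, g (m + 1)))) := by
    classical
  obtain ⟨⟨hMsub, hMmatch⟩, hMmax⟩ := hM
  have hdiaginj : Function.Injective (fun k : ℕ => (k, k)) := by
    intro a b h; simpa using h
  have hdiagcard : (diagM t).card = t := by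
    rw [diagM, Finset.card_image_of_injective _ hdiaginj, Finset.card_range]
  have hginj' : ∀ a ≤ ℓ + 1, ∀ b ≤ ℓ + 1, g a = g b → a = b := by
    intro a ha b hb h
    exact hginj (Set.mem_Iic.2 ha) (Set.mem_Iic.2 hb) h
  have hne_i : ∀ m ≤ ℓ, g m ≠ i := by
    intro m hm h
    have := hginj' m (by omega) (ℓ + 1) le_rfl (h.trans hgend.symm)
    omega
  have hne_j : ∀ m, 1 ≤ m → m ≤ ℓ + 1 → g m ≠ j := by
    intro m h1 h2 h
    have := hginj' m h2 0 (by omega) (h.trans hg0.symm)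
    omega
  set Q := (Finset.range (ℓ + 1)).image (fun m => (g m, g (m + 1))) with hQ
  set P := (diagM t).filter (fun e => ∀ m < ℓ + 2, g m ≠ e.1) with hP
  have hmemP : ∀ e ∈ P, ∃ k, k < t ∧ e = (k, k) ∧ ∀ m < ℓ + 2, g m ≠ k := by
    intro e heP
    rw [hP, Finset.mem_filter] at heP
    obtain ⟨he1, he2⟩ := heP
    rw [diagM, Finset.mem_image] at he1
    obtain ⟨k, hk, hke⟩ := he1
    rw [Finset.mem_range] at hk
    exact ⟨k, hk, hke.symm, by intro m hm; have := he2 m hm; rw [← hke] at this; exact this⟩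
  have hmemQ : ∀ e ∈ Q, ∃ m, m < ℓ + 1 ∧ e = (g m, g (m + 1)) := by
    intro e heQ
    rw [hQ, Finset.mem_image] at heQ
    obtain ⟨m, hm, hme⟩ := heQ
    exact ⟨m, Finset.mem_range.1 hm, hme.symm⟩
  constructor
  · constructor
    · -- subset of E'
      intro e hePQ
      rw [Finset.mem_filter]
      rcases Finset.mem_union.1 hePQ with heP | heQ
      · obtain ⟨k, hk, rfl, hkg⟩ := hmemP e heP
        refine ⟨hMsub ?_, ?_, ?_⟩
        · rw [diagM, Finset.mem_image]; exact ⟨k, Finset.mem_range.2 hk, rfl⟩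
        · intro h; exact hkg (ℓ + 1) (by omega) (hgend.trans h.symm)
        · intro h; exact hkg 0 (by omega) (hg0.trans h.symm)
      · obtain ⟨m, hm, rfl⟩ := hmemQ e heQ
        refine ⟨hpath m hm, ?_, ?_⟩
        · exact hne_i m (by omega)
        · exact hne_j (m + 1) (by omega) (by omega)
    · -- is a matching
      intro e he' f hf' hef
      rcases Finset.mem_union.1 he' with heP | heQ <;>
        rcases Finset.mem_union.1 hf' with hfP | hfQ
      · obtain ⟨k, hk, rfl, hkg⟩ := hmemP e heP
        obtain ⟨k', hk', rfl, hkg'⟩ := hmemP f hfP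
        have : k ≠ k' := fun h => hef (by rw [h])
        exact ⟨this, this⟩
      · obtain ⟨k, hk, rfl, hkg⟩ := hmemP e heP
        obtain ⟨m, hm, rfl⟩ := hmemQ f hfQ
        exact ⟨fun h => hkg m (by omega) h.symm, fun h => hkg (m + 1) (by omega) h.symm⟩
      · obtain ⟨m, hm, rfl⟩ := hmemQ e heQ
        obtain ⟨k, hk, rfl, hkg⟩ := hmemP f hfP
        exact ⟨fun h => hkg m (by omega) h, fun h => hkg (m + 1) (by omega) h⟩
      · obtain ⟨m, hm, rfl⟩ := hmemQ e heQ
        obtain ⟨m', hm', rfl⟩ := hmemQ f hfQ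
        have hmm : m ≠ m' := fun h => hef (by rw [h])
        constructor
        · intro h; exact hmm (hginj' m (by omega) m' (by omega) h)
        · intro h
          have := hginj' (m + 1) (by omega) (m' + 1) (by omega) h
          omega
  · -- maximality
    -- first: the cardinality of P ∪ Q is t - 1
    have hsubimg : (Finset.range (ℓ + 2)).image g ⊆ Finset.range t := by
      intro x hx
      obtain ⟨m, hm, rfl⟩ := Finset.mem_image.1 hx
      exact Finset.mem_range.2 (hgt m (by have := Finset.mem_range.1 hm; omega))
    have himgcard : ((Finset.range (ℓ + 2)).image g).card = ℓ + 2 := by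
      rw [Finset.card_image_of_injOn, Finset.card_range]
      intro a ha b hb h
      exact hginj' a (by have := Finset.mem_range.1 (by exact_mod_cast ha); omega)
        b (by have := Finset.mem_range.1 (by exact_mod_cast hb); omega) h
    have hlt : ℓ + 2 ≤ t := by
      have := Finset.card_le_card hsubimg
      rw [himgcard, Finset.card_range] at this
      exact this
    have hPeq : P = (Finset.range t \ (Finset.range (ℓ + 2)).image g).image
        (fun k => (k, k)) := by
      ext e
      constructor
      · intro heP
        obtain ⟨k, hk, rfl, hkg⟩ := hmemP e heP
        rw [Finset.mem_image]
        refine ⟨k, ?_, rfl⟩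
        rw [Finset.mem_sdiff, Finset.mem_range]
        refine ⟨hk, fun h => ?_⟩
        obtain ⟨m, hm, hgm⟩ := Finset.mem_image.1 h
        exact hkg m (Finset.mem_range.1 hm) hgm
      · intro h
        obtain ⟨k, hk, rfl⟩ := Finset.mem_image.1 h
        rw [Finset.mem_sdiff, Finset.mem_range] at hk
        rw [hP, Finset.mem_filter]
        refine ⟨?_, fun m hm hgm => hk.2 (Finset.mem_image.2 ⟨m, Finset.mem_range.2 hm, hgm⟩)⟩
        rw [diagM, Finset.mem_image]
        exact ⟨k, Finset.mem_range.2 hk.1, rfl⟩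
    have hPcard : P.card = t - (ℓ + 2) := by
      rw [hPeq, Finset.card_image_of_injective _ hdiaginj,
        Finset.card_sdiff_of_subset hsubimg, himgcard, Finset.card_range]
    have hQcard : Q.card = ℓ + 1 := by
      rw [hQ, Finset.card_image_of_injOn, Finset.card_range]
      intro a ha b hb h
      have ha' := Finset.mem_range.1 (by exact_mod_cast ha)
      have hb' := Finset.mem_range.1 (by exact_mod_cast hb)
      exact hginj' a (by omega) b (by omega) (congrArg Prod.fst h)
    have hdisj : Disjoint P Q := by
      rw [Finset.disjoint_left]
      intro e heP heQ
      obtain ⟨k, hk, rfl, hkg⟩ := hmemP _ heP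
      obtain ⟨m, hm, heq⟩ := hmemQ _ heQ
      exact hkg m (by omega) (congrArg Prod.fst heq).symm
    have hPQcard : (P ∪ Q).card = t - 1 := by
      rw [Finset.card_union_of_disjoint hdisj, hPcard, hQcard]
      omega
    intro M' hM'
    obtain ⟨hsub, hmatch⟩ := hM'
    have hME : M' ⊆ E := fun e h => (Finset.mem_filter.1 (hsub h)).1
    have hfreei : ∀ e ∈ M', e.1 ≠ i ∧ e.2 ≠ j := fun e h => (Finset.mem_filter.1 (hsub h)).2
    have hij_not : (i, j) ∉ M' := fun h => (hfreei _ h).1 rfl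
    have hins : IsMatchingIn E (insert (i, j) M') := by
      constructor
      · intro e h
        rcases Finset.mem_insert.1 h with rfl | h
        · exact he
        · exact hME h
      · intro e he1 f hf1 hef
        rcases Finset.mem_insert.1 he1 with rfl | he1 <;>
          rcases Finset.mem_insert.1 hf1 with rfl | hf1
        · exact absurd rfl hef
        · exact ⟨fun h => (hfreei f hf1).1 h.symm, fun h => (hfreei f hf1).2 h.symm⟩
        · exact ⟨(hfreei e he1).1, (hfreei e he1).2⟩
        · exact hmatch e he1 f hf1 hef
    have hcardins := hMmax _ hins
    rw [Finset.card_insert_of_notMem hij_not, hdiagcard] at hcardins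
    rw [hPQcard]
    omega
end
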